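/- arXiv:2107.02571 — 5 statements merged into one kernel-verified Lean document; each statement's English description precedes it below -/
import Mathlib

section
/- Let λ ∈ ℝ with λ ≠ 0, α ∈ ℝ, x ∈ ℝ, and let t ∈ ℝ satisfy |t| < 1 and |λ·x·t| < 1 − |t|. Then the series Σ_{n=0}^∞ L^{(α)}_{n,λ}(x)·t^n converges with sum (1 − t)^{−(α+1)} · (1 − λ·x·t/(1 − t))^{1/λ}. (Equivalently: the coefficient of t^n in the generating function (1−t)^{−(α+1)} e_λ(−xt/(1−t)) is Σ_{m=0}^{n} binom(n+α, n−m)·(−1)^m·(1)_{m,λ}·x^m/m!.) -/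
/-- The degenerate falling factorial `(1)_{m,λ} = ∏_{j=0}^{m-1} (1 - jλ)`. -/
noncomputable def degFall (lam : ℝ) (m : ℕ) : ℝ :=
  ∏ j ∈ Finset.range m, (1 - (j : ℝ) * lam)

/-- Generalized binomial coefficient `binom(n+α, n−m) = (∏_{j=0}^{n−m−1} (n+α−j))/(n−m)!`. -/
noncomputable def genBinom (α : ℝ) (n m : ℕ) : ℝ :=
  (∏ j ∈ Finset.range (n - m), ((n : ℝ) + α - (j : ℝ))) / (Nat.factorial (n - m) : ℝ)

/-- The degenerate generalized Laguerre polynomial `L^{(α)}_{n,λ}(x)`. -/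
noncomputable def degLaguerre (lam α : ℝ) (n : ℕ) (x : ℝ) : ℝ :=
  ∑ m ∈ Finset.range (n + 1),
    genBinom α n m * (-1 : ℝ) ^ m * degFall lam m * x ^ m / (Nat.factorial m : ℝ)

/-!
Expanding `e_λ(-xt/(1-t)) = (1 - λxt/(1-t))^{1/λ}` by the binomial series gives
`∑ₘ binom(1/λ, m) (-λxt)ᵐ (1-t)^{-(α+1+m)}`, and expanding each `(1-t)^{-(α+1+m)}` by the negative
binomial series `∑ₖ multichoose(α+1+m, k) tᵏ` gives a double series whose antidiagonal sums are
`L^{(α)}_{n,λ}(x) tⁿ`: indeed `λᵐ binom(1/λ, m) = (1)_{m,λ}/m!` and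
`multichoose(α+1+m, n-m) = binom(n+α, n-m)`. The rearrangement is justified by absolute
convergence: termwise, the absolute values are dominated by the same double series at
`(|α+1|, -|1/λ|, -|λxt|, |t|)`, whose terms are nonnegative and which converges when
`|λxt| < 1 - |t|`.
-/

open Finset

namespace Ring

variable {K : Type*} [Field K] [CharZero K]

theorem choose_eq_prod_range_div (b : K) (k : ℕ) :
    choose b k = (∏ j ∈ range k, (b - j)) / k.factorial := by
  rw [choose_eq_smul, smul_eq_mul, inv_mul_eq_div, ← descPochhammer_eval_eq_prod_range,
    ← descPochhammer_map (algebraMap ℤ K), Polynomial.eval_map_algebraMap,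
    Polynomial.aeval_eq_smeval]

theorem multichoose_eq_prod_range_div (a : K) (k : ℕ) :
    multichoose a k = (∏ j ∈ range k, (a + j)) / k.factorial := by
  rw [multichoose_eq, choose_eq_prod_range_div, ← prod_range_reflect (fun j : ℕ ↦ a + j) k]
  congr 1
  refine prod_congr rfl fun j hj ↦ ?_
  rw [Nat.cast_sub (by grind), Nat.cast_sub (by grind)]
  push_cast
  ring

end Ring

namespace Real

open Ring

theorem abs_choose_le (b : ℝ) (k : ℕ) : |choose b k| ≤ (-1) ^ k * choose (-|b|) k := by
  have hneg : ∏ j ∈ range k, (-|b| - j) = (-1) ^ k * ∏ j ∈ range k, (|b| + (j : ℝ)) := by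
    have h := prod_neg (s := range k) fun j : ℕ ↦ |b| + (j : ℝ)
    rw [card_range] at h
    exact h ▸ prod_congr rfl fun j _ ↦ by ring
  rw [choose_eq_prod_range_div, choose_eq_prod_range_div, hneg, mul_div_assoc, ← mul_assoc,
    ← mul_pow, neg_one_mul, neg_neg, one_pow, one_mul, abs_div, Nat.abs_cast, abs_prod]
  gcongr with j
  exact (abs_sub _ _).trans_eq (by rw [Nat.abs_cast])

theorem abs_multichoose_le {a a' : ℝ} (h : |a| ≤ a') (k : ℕ) :
    |multichoose a k| ≤ multichoose a' k := by
  rw [multichoose_eq_prod_range_div, multichoose_eq_prod_range_div, abs_div, Nat.abs_cast,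
    abs_prod]
  gcongr with j
  exact (abs_add_le _ _).trans (by rw [Nat.abs_cast]; linarith)

theorem hasSum_choose_mul_pow (b : ℝ) {u : ℝ} (hu : |u| < 1) :
    HasSum (fun m ↦ choose b m * u ^ m) ((1 + u) ^ b) := by
  have h := (one_add_rpow_hasFPowerSeriesOnBall_zero (a := b)).hasSum (y := u)
    (by simpa [← ofReal_norm] using hu)
  simpa [binomialSeries, FormalMultilinearSeries.ofScalars_apply_eq, mul_comm] using h

theorem hasSum_multichoose_mul_pow (a : ℝ) {t : ℝ} (ht : |t| < 1) :
    HasSum (fun k ↦ multichoose a k * t ^ k) ((1 - t) ^ (-a)) := by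
  have h := (one_div_one_sub_rpow_hasFPowerSeriesOnBall_zero a).hasSum (y := t)
    (by simpa [← ofReal_norm] using ht)
  have h1 : 0 ≤ 1 - t := by linarith [le_abs_self t]
  simpa [FormalMultilinearSeries.ofScalars_apply_eq, multichoose_eq, rpow_neg h1, mul_comm] using h

end Real

theorem HasSum.sum_antidiagonal {A α : Type*} [AddCommMonoid A] [HasAntidiagonal A]
    [AddCommMonoid α] [TopologicalSpace α] [ContinuousAdd α] [RegularSpace α]
    {f : A × A → α} {a : α} (h : HasSum f a) :
    HasSum (fun n ↦ ∑ p ∈ antidiagonal n, f p) a :=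
  (HasAntidiagonal.sigmaAntidiagonalEquivProd.hasSum_iff.2 h).sigma fun n ↦ by
    rw [← sum_coe_sort]
    exact hasSum_fintype _

open Ring Real

noncomputable def binomialDoubleTerm (a b s t : ℝ) (p : ℕ × ℕ) : ℝ :=
  choose b p.1 * s ^ p.1 * (multichoose (a + p.1) p.2 * t ^ p.2)

section BinomialDoubleTerm

variable {a b s t : ℝ}

theorem hasSum_binomialDoubleTerm_fiber (ht : |t| < 1) (m : ℕ) :
    HasSum (fun k ↦ binomialDoubleTerm a b s t (m, k))
      (choose b m * s ^ m * (1 - t) ^ (-(a + m))) :=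
  (hasSum_multichoose_mul_pow (a + m) ht).mul_left _

theorem hasSum_choose_mul_pow_mul_rpow (ht : |t| < 1) (hst : |s| < 1 - |t|) :
    HasSum (fun m : ℕ ↦ choose b m * s ^ m * (1 - t) ^ (-(a + m)))
      ((1 - t) ^ (-a) * (1 + s / (1 - t)) ^ b) := by
  have h1 : 0 < 1 - t := by linarith [le_abs_self t]
  have hu : |s / (1 - t)| < 1 := by
    rw [abs_div, abs_of_pos h1, div_lt_one h1]
    linarith [le_abs_self t]
  have hterm (m : ℕ) : choose b m * s ^ m * (1 - t) ^ (-(a + m)) =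
      (1 - t) ^ (-a) * (choose b m * (s / (1 - t)) ^ m) := by
    rw [neg_add, rpow_add h1, rpow_neg h1.le (m : ℝ), rpow_natCast, div_pow]
    field_simp
  simpa only [hterm] using (hasSum_choose_mul_pow b hu).mul_left ((1 - t) ^ (-a))

theorem abs_binomialDoubleTerm_le (p : ℕ × ℕ) :
    |binomialDoubleTerm a b s t p| ≤ binomialDoubleTerm |a| (-|b|) (-|s|) |t| p := by
  obtain ⟨m, k⟩ := p
  have hb := abs_choose_le b m
  have hab : |a + m| ≤ |a| + m := (abs_add_le _ _).trans_eq (by rw [Nat.abs_cast])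
  have hb_nonneg := (abs_nonneg _).trans hb
  calc |binomialDoubleTerm a b s t (m, k)|
      = |choose b m| * |s| ^ m * (|multichoose (a + m) k| * |t| ^ k) := by
        simp only [binomialDoubleTerm, abs_mul, abs_pow]
    _ ≤ (-1) ^ m * choose (-|b|) m * |s| ^ m * (multichoose (|a| + m) k * |t| ^ k) := by
        gcongr
        exact abs_multichoose_le hab k
    _ = binomialDoubleTerm |a| (-|b|) (-|s|) |t| (m, k) := by
        rw [binomialDoubleTerm, neg_pow]
        ring

theorem summable_binomialDoubleTerm (ht : |t| < 1) (hst : |s| < 1 - |t|) :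
    Summable (binomialDoubleTerm a b s t) := by
  have ht' : |(|t|)| < 1 := by rwa [abs_abs]
  have hst' : |(-|s|)| < 1 - |(|t|)| := by rwa [abs_neg, abs_abs, abs_abs]
  have hmajorant : Summable (binomialDoubleTerm |a| (-|b|) (-|s|) |t|) :=
    (summable_prod_of_nonneg fun p ↦ (abs_nonneg _).trans (abs_binomialDoubleTerm_le p)).2
      ⟨fun m ↦ (hasSum_binomialDoubleTerm_fiber ht' m).summable,
        (hasSum_choose_mul_pow_mul_rpow ht' hst').summable.congr fun m ↦
          (hasSum_binomialDoubleTerm_fiber ht' m).tsum_eq.symm⟩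
  exact hmajorant.of_norm_bounded abs_binomialDoubleTerm_le

theorem hasSum_binomialDoubleTerm (ht : |t| < 1) (hst : |s| < 1 - |t|) :
    HasSum (binomialDoubleTerm a b s t) ((1 - t) ^ (-a) * (1 + s / (1 - t)) ^ b) := by
  have h := (summable_binomialDoubleTerm (a := a) (b := b) ht hst).hasSum
  rwa [(h.prod_fiberwise (hasSum_binomialDoubleTerm_fiber ht)).unique
    (hasSum_choose_mul_pow_mul_rpow ht hst)] at h

end BinomialDoubleTerm

theorem genBinom_eq_multichoose (α : ℝ) {n m : ℕ} (h : m ≤ n) :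
    genBinom α n m = multichoose (α + 1 + m) (n - m) := by
  rw [multichoose_eq, choose_eq_prod_range_div, genBinom, Nat.cast_sub h]
  congr! 3
  ring

theorem degFall_div_factorial {lam : ℝ} (hlam : lam ≠ 0) (m : ℕ) :
    degFall lam m / m.factorial = lam ^ m * choose (1 / lam) m := by
  rw [choose_eq_prod_range_div, mul_div_assoc', degFall]
  congr 1
  calc ∏ j ∈ range m, (1 - (j : ℝ) * lam) = ∏ j ∈ range m, (lam * (1 / lam - j)) :=
        prod_congr rfl fun j _ ↦ by field_simp
    _ = lam ^ m * ∏ j ∈ range m, (1 / lam - j) := by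
        rw [prod_mul_distrib, prod_const, card_range]

theorem sum_antidiagonal_binomialDoubleTerm {lam : ℝ} (hlam : lam ≠ 0) (α x t : ℝ) (n : ℕ) :
    ∑ p ∈ antidiagonal n, binomialDoubleTerm (α + 1) (1 / lam) (-(lam * x * t)) t p =
      degLaguerre lam α n x * t ^ n := by
  rw [Nat.sum_antidiagonal_eq_sum_range_succ_mk, degLaguerre, sum_mul]
  refine sum_congr rfl fun m hm ↦ ?_
  have hmn : m ≤ n := Nat.lt_succ_iff.mp (mem_range.mp hm)
  rw [binomialDoubleTerm, genBinom_eq_multichoose α hmn, mul_div_right_comm, mul_div_assoc,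
    degFall_div_factorial hlam, ← Nat.add_sub_cancel' hmn, pow_add, Nat.add_sub_cancel_left]
  ring

/-- Generating function of the degenerate generalized Laguerre polynomials:
`∑ L^{(α)}_{n,λ}(x) tⁿ = (1−t)^{−(α+1)} e_λ(−xt/(1−t))` where `e_λ(u) = (1+λu)^{1/λ}`. -/
theorem degLaguerre_generating_function (lam α x t : ℝ) (hlam : lam ≠ 0)
    (ht : |t| < 1) (hxt : |lam * x * t| < 1 - |t|) :
    HasSum (fun n : ℕ => degLaguerre lam α n x * t ^ n)
      ((1 - t) ^ (-(α + 1)) * (1 - lam * x * t / (1 - t)) ^ (1 / lam)) := by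
  have h := (hasSum_binomialDoubleTerm (a := α + 1) (b := 1 / lam) (s := -(lam * x * t)) ht
    (by rwa [abs_neg])).sum_antidiagonal
  simp only [sum_antidiagonal_binomialDoubleTerm hlam] at h
  rwa [neg_div, ← sub_eq_add_neg] at h
end

section
/- Let λ ∈ ℝ with λ ≠ 0, α ∈ ℝ, a ∈ ℝ, and n ∈ ℕ. For every x > 0 with x > |λ·a|, the n-th derivative at x of the function x ↦ x^α · (1 − λ·a/x)^{1/λ} equals (−1)^n · x^{α−n} · n! · (1 − λ·a/x)^{1/λ} · L^{(−α−1)}_{n,λ}(a/(x − a·λ)). -/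
/-!
Since `(1 - λa/x)^{1/λ} = x^{-1/λ} (x - λa)^{1/λ}`, the right-hand side equals
`(-1)^n n! ∑_m binom(n-α-1, n-m) e_m a^m x^{α-n-1/λ} (x - λa)^{1/λ-m}` with
`e_m = (-1)^m (1)_{m,λ} / m!`. Differentiating the `m`-th term lowers the exponent of `x` by one and
gives `(α-n-m)` times the `m`-th term minus `(m+1)` times the `(m+1)`-st, because
`r (x - c) + s x = (r + s)(x - c) + s c` and `(1/λ - m) λ e_m = -(m+1) e_{m+1}`. All dependence on `λ`
is thereby absorbed into the `e_m`, and the step `n → n+1` reduces to a Pascal-type recurrence for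
the generalized binomial coefficients.
-/

open Finset Real
open scoped Nat

theorem genBinom_self (β : ℝ) (n : ℕ) : genBinom β n n = 1 := by
  simp [genBinom]

theorem genBinom_succ_left (β : ℝ) {n m : ℕ} (h : m ≤ n) :
    ((n - m : ℕ) + 1 : ℝ) * genBinom β (n + 1) m = (n + 1 + β) * genBinom β n m := by
  rw [genBinom, genBinom, Nat.sub_add_comm h, prod_range_succ', Nat.factorial_succ]
  push_cast
  field_simp
  ring_nf

theorem genBinom_succ_succ (β : ℝ) {n m : ℕ} (h : m < n) :
    (n + 1 : ℝ) * genBinom β (n + 1) (m + 1) =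
      (n + m + 2 + β) * genBinom β n (m + 1) + (m + 1) * genBinom β n m := by
  obtain ⟨k, rfl⟩ : ∃ k, n = m + 1 + k := ⟨n - (m + 1), by omega⟩
  rw [genBinom, genBinom, genBinom, show m + 1 + k - m = k + 1 by omega,
    show m + 1 + k - (m + 1) = k by omega, show m + 1 + k + 1 - (m + 1) = k + 1 by omega,
    prod_range_succ', prod_range_succ, Nat.factorial_succ]
  push_cast
  field_simp
  ring_nf

theorem sum_genBinom_succ_mul (β : ℝ) (n : ℕ) (b : ℕ → ℝ) :
    (n + 1 : ℝ) * ∑ m ∈ range (n + 2), genBinom β (n + 1) m * b m =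
      ∑ m ∈ range (n + 1), genBinom β n m * ((n + m + 1 + β) * b m + (m + 1) * b (m + 1)) := by
  have h0 := genBinom_succ_left β (Nat.zero_le n)
  simp only [Nat.sub_zero] at h0
  have hmid : ∀ m ∈ range n, (n + 1 : ℝ) * (genBinom β (n + 1) (m + 1) * b (m + 1)) =
      genBinom β n (m + 1) * ((n + (m + 1 : ℕ) + 1 + β) * b (m + 1)) +
        genBinom β n m * ((m + 1) * b (m + 1)) := fun m hm => by
    have := genBinom_succ_succ β (mem_range.1 hm)
    push_cast
    linear_combination b (m + 1) * this
  simp only [mul_add, sum_add_distrib]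
  rw [sum_range_succ' (fun m => genBinom β n m * ((n + m + 1 + β) * b m)),
    sum_range_succ (fun m => genBinom β n m * ((m + 1) * b (m + 1))),
    mul_sum, sum_range_succ _ (n + 1), sum_range_succ', sum_congr rfl hmid, sum_add_distrib,
    genBinom_self, genBinom_self]
  push_cast
  linear_combination b 0 * h0

theorem degFall_succ (lam : ℝ) (m : ℕ) : degFall lam (m + 1) = degFall lam m * (1 - m * lam) :=
  prod_range_succ _ m

theorem rpow_eq_rpow_sub_one_mul {x : ℝ} (hx : x ≠ 0) (r : ℝ) : x ^ r = x ^ (r - 1) * x := by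
  rw [← rpow_add_one hx, sub_add_cancel]

theorem hasDerivAt_rpow_mul_sub_rpow (r s c : ℝ) {x : ℝ} (hx : x ≠ 0) (hxc : x - c ≠ 0) :
    HasDerivAt (fun y => y ^ r * (y - c) ^ s)
      (x ^ (r - 1) * ((r + s) * (x - c) ^ s + s * c * (x - c) ^ (s - 1))) x := by
  refine ((hasDerivAt_rpow_const (Or.inl hx)).fun_mul
    (((hasDerivAt_id' x).sub_const c).rpow_const (Or.inl hxc))).congr_deriv ?_
  rw [rpow_eq_rpow_sub_one_mul hx r, rpow_eq_rpow_sub_one_mul hxc s]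
  ring

theorem rpow_mul_one_sub_div_rpow (r s : ℝ) {c x : ℝ} (hx : 0 < x) (hxc : 0 ≤ x - c) :
    x ^ r * (1 - c / x) ^ s = x ^ (r - s) * (x - c) ^ s := by
  rw [one_sub_div hx.ne', div_rpow hxc hx.le, rpow_sub hx]
  ring

noncomputable def laguerreTerm (lam α a : ℝ) (n m : ℕ) (x : ℝ) : ℝ :=
  (-1) ^ m * degFall lam m / m ! * a ^ m * (x ^ (α - n - 1 / lam) * (x - lam * a) ^ (1 / lam - m))

theorem hasDerivAt_laguerreTerm {lam : ℝ} (hlam : lam ≠ 0) (α a : ℝ) (n m : ℕ) {x : ℝ}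
    (hx : x ≠ 0) (hxa : x - lam * a ≠ 0) :
    HasDerivAt (laguerreTerm lam α a n m)
      ((α - n - m) * laguerreTerm lam α a (n + 1) m x
        - (m + 1) * laguerreTerm lam α a (n + 1) (m + 1) x) x := by
  refine ((hasDerivAt_rpow_mul_sub_rpow _ _ _ hx hxa).const_mul _).congr_deriv ?_
  rw [laguerreTerm, laguerreTerm, degFall_succ, Nat.factorial_succ,
    show α - (n + 1 : ℕ) - 1 / lam = α - n - 1 / lam - 1 by push_cast; ring,
    show 1 / lam - (m + 1 : ℕ) = 1 / lam - m - 1 by push_cast; ring,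
    rpow_eq_rpow_sub_one_mul hxa (1 / lam - m)]
  push_cast
  field_simp
  ring

noncomputable def laguerreForm (lam α a : ℝ) (n : ℕ) (x : ℝ) : ℝ :=
  (-1) ^ n * n ! * ∑ m ∈ range (n + 1), genBinom (-α - 1) n m * laguerreTerm lam α a n m x

theorem hasDerivAt_laguerreForm {lam : ℝ} (hlam : lam ≠ 0) (α a : ℝ) (n : ℕ) {x : ℝ}
    (hx : x ≠ 0) (hxa : x - lam * a ≠ 0) :
    HasDerivAt (laguerreForm lam α a n) (laguerreForm lam α a (n + 1) x) x := by
  refine ((HasDerivAt.fun_sum fun m _ => (hasDerivAt_laguerreTerm hlam α a n m hx hxa).const_mul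
    (genBinom (-α - 1) n m)).const_mul ((-1 : ℝ) ^ n * n !)).congr_deriv ?_
  set b := fun m => laguerreTerm lam α a (n + 1) m x
  have hneg : ∑ m ∈ range (n + 1), genBinom (-α - 1) n m * ((α - n - m) * b m - (m + 1) * b (m + 1))
      = -∑ m ∈ range (n + 1),
          genBinom (-α - 1) n m * ((n + m + 1 + (-α - 1)) * b m + (m + 1) * b (m + 1)) := by
    rw [← sum_neg_distrib]
    exact sum_congr rfl fun m _ => by ring
  rw [laguerreForm, hneg, ← sum_genBinom_succ_mul, Nat.factorial_succ]
  push_cast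
  ring

theorem laguerreForm_eq {lam : ℝ} (α a : ℝ) (n : ℕ) {x : ℝ} (hx : 0 < x) (hxa : 0 < x - lam * a) :
    laguerreForm lam α a n x = (-1) ^ n * x ^ (α - n) * n ! * (1 - lam * a / x) ^ (1 / lam) *
      degLaguerre lam (-α - 1) n (a / (x - a * lam)) := by
  have hterm (m : ℕ) : laguerreTerm lam α a n m x = x ^ (α - n) * (1 - lam * a / x) ^ (1 / lam) *
      ((-1) ^ m * degFall lam m / m ! * (a / (x - a * lam)) ^ m) := by
    rw [laguerreTerm, rpow_mul_one_sub_div_rpow _ _ hx hxa.le, rpow_sub hxa, rpow_natCast, div_pow,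
      mul_comm a lam]
    field_simp
  simp only [laguerreForm, hterm, degLaguerre, mul_sum]
  exact sum_congr rfl fun m _ => by ring

theorem degLaguerre_zero (lam β t : ℝ) : degLaguerre lam β 0 t = 1 := by
  simp [degLaguerre, genBinom, degFall]

theorem Set.EqOn.iteratedDeriv_of_hasDerivAt {𝕜 F : Type*} [NontriviallyNormedField 𝕜]
    [NormedAddCommGroup F] [NormedSpace 𝕜 F] {s : Set 𝕜} (hs : IsOpen s) {f : 𝕜 → F}
    {g : ℕ → 𝕜 → F} (hf : EqOn f (g 0) s) (hg : ∀ n, ∀ x ∈ s, HasDerivAt (g n) (g (n + 1) x) x)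
    (n : ℕ) : EqOn (iteratedDeriv n f) (g n) s := by
  induction n with
  | zero => simpa using hf
  | succ n ih =>
    intro x hx
    rw [iteratedDeriv_succ, ih.deriv hs hx, (hg n x hx).deriv]

/-- Theorem 2: `dⁿ/dxⁿ [x^α e_λ(−a/x)] = (−1)ⁿ x^{α−n} n! e_λ(−a/x) L^{(−α−1)}_{n,λ}(a/(x−aλ))`,
where `e_λ(−a/x) = (1 − λa/x)^{1/λ}`. -/
theorem iteratedDeriv_rpow_mul_degExp (lam α a : ℝ) (hlam : lam ≠ 0) (n : ℕ) :
    ∀ x : ℝ, 0 < x → |lam * a| < x →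
      iteratedDeriv n (fun y : ℝ => y ^ α * (1 - lam * a / y) ^ (1 / lam)) x =
        (-1 : ℝ) ^ n * x ^ (α - (n : ℝ)) * (Nat.factorial n : ℝ) *
          (1 - lam * a / x) ^ (1 / lam) * degLaguerre lam (-α - 1) n (a / (x - a * lam)) := by
  have hdom {x : ℝ} (hx : x ∈ Set.Ioi |lam * a|) : 0 < x ∧ 0 < x - lam * a :=
    ⟨(abs_nonneg _).trans_lt hx, sub_pos.2 ((le_abs_self _).trans_lt hx)⟩
  have hf : Set.EqOn (fun y : ℝ => y ^ α * (1 - lam * a / y) ^ (1 / lam)) (laguerreForm lam α a 0)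
      (Set.Ioi |lam * a|) := fun x hx => by
    simp [laguerreForm_eq α a 0 (hdom hx).1 (hdom hx).2, degLaguerre_zero]
  intro x hx hxa
  rw [hf.iteratedDeriv_of_hasDerivAt isOpen_Ioi
      (fun n y hy => hasDerivAt_laguerreForm hlam α a n (hdom hy).1.ne' (hdom hy).2.ne') n hxa,
    laguerreForm_eq α a n hx (hdom hxa).2]
end

section
/- (Rodrigues' type formula.) Let λ ∈ ℝ with λ ≠ 0, α ∈ ℝ, and n ∈ ℕ. For every x > 0 with |λ·x| < 1, the n-th derivative at x of the function x ↦ (1 − λ·x)^{1/λ} · x^{n+α} equals n! · (1 − λ·x)^{1/λ} · x^{α} · L^{(α)}_{n,λ}(x/(1 − λ·x)). -/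
open Finset Set

lemma iteratedDeriv_eqOn_of_hasDerivAt {𝕜 E : Type*} [NontriviallyNormedField 𝕜]
    [NormedAddCommGroup E] [NormedSpace 𝕜 E] {f : 𝕜 → E} {F : ℕ → 𝕜 → E} {U : Set 𝕜}
    (hU : IsOpen U) (hf : EqOn f (F 0) U)
    (hF : ∀ k, ∀ y ∈ U, HasDerivAt (F k) (F (k + 1) y) y) (k : ℕ) :
    EqOn (iteratedDeriv k f) (F k) U := by
  induction k with
  | zero => simpa using hf
  | succ k ih =>
    intro y hy
    rw [iteratedDeriv_succ, (ih.eventuallyEq_of_mem (hU.mem_nhds hy)).deriv_eq]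
    exact (hF k y hy).deriv

lemma iteratedDeriv_one_sub_mul_rpow (lam p : ℝ) (k : ℕ) :
    EqOn (iteratedDeriv k fun y => (1 - lam * y) ^ p)
      (fun y => (-lam) ^ k * (descPochhammer ℝ k).eval p * (1 - lam * y) ^ (p - k))
      {y | 0 < 1 - lam * y} := by
  have hU : IsOpen {y : ℝ | 0 < 1 - lam * y} := isOpen_lt continuous_const (by fun_prop)
  refine iteratedDeriv_eqOn_of_hasDerivAt (F := fun k y =>
    (-lam) ^ k * (descPochhammer ℝ k).eval p * (1 - lam * y) ^ (p - k)) hU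
    (fun y _ => by simp) (fun k y hy => ?_) k
  have hbase : HasDerivAt (fun y : ℝ => 1 - lam * y) (-lam) y := by
    simpa using ((hasDerivAt_id y).const_mul lam).const_sub 1
  refine ((hbase.rpow_const (p := p - k) (Or.inl hy.ne')).const_mul
    ((-lam) ^ k * (descPochhammer ℝ k).eval p)).congr_deriv ?_
  rw [descPochhammer_succ_eval]
  push_cast
  ring_nf

lemma pow_mul_descPochhammer_eval_one_div {lam : ℝ} (hlam : lam ≠ 0) (m : ℕ) :
    lam ^ m * (descPochhammer ℝ m).eval (1 / lam) = degFall lam m := by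
  induction m with
  | zero => simp [degFall]
  | succ m ih =>
    rw [degFall, prod_range_succ, ← degFall, ← ih, descPochhammer_succ_eval]
    field_simp
    ring

lemma genBinom_eq_descPochhammer_div (α : ℝ) (n m : ℕ) :
    genBinom α n m = (descPochhammer ℝ (n - m)).eval ((n : ℝ) + α) / (n - m).factorial := by
  rw [genBinom, descPochhammer_eval_eq_prod_range]

lemma leibniz_term_eq_degLaguerre_term {lam : ℝ} (hlam : lam ≠ 0) (α : ℝ)
    {n m : ℕ} (hmn : m ≤ n) {x : ℝ} (hx : 0 < x) (hx' : 0 < 1 - lam * x) :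
    (n.choose m : ℝ) * ((-lam) ^ m * (descPochhammer ℝ m).eval (1 / lam) *
        (1 - lam * x) ^ (1 / lam - m)) *
      (descPochhammer ℝ (n - m)).eval ((n : ℝ) + α) * x ^ ((n : ℝ) + α - (n - m : ℕ)) =
    n.factorial * (1 - lam * x) ^ (1 / lam) * x ^ α *
      (genBinom α n m * (-1) ^ m * degFall lam m * (x / (1 - lam * x)) ^ m / m.factorial) := by
  have hexp : (n : ℝ) + α - (n - m : ℕ) = α + m := by
    rw [Nat.cast_sub hmn]
    ring
  have hfact : (n.factorial : ℝ) = n.choose m * m.factorial * (n - m).factorial := by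
    rw [← Nat.choose_mul_factorial_mul_factorial hmn]
    push_cast
    ring
  rw [hexp, Real.rpow_add_natCast hx.ne', Real.rpow_sub_natCast hx'.ne', hfact,
    genBinom_eq_descPochhammer_div, ← pow_mul_descPochhammer_eval_one_div hlam, neg_pow, div_pow]
  field_simp

/-- Rodrigues' type formula:
`dⁿ/dxⁿ [e_λ(−x) x^{n+α}] = n! e_λ(−x) x^α L^{(α)}_{n,λ}(x/(1−λx))`,
where `e_λ(−x) = (1 − λx)^{1/λ}`. -/
theorem degLaguerre_rodrigues (lam α : ℝ) (hlam : lam ≠ 0) (n : ℕ) :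
    ∀ x : ℝ, 0 < x → |lam * x| < 1 →
      iteratedDeriv n (fun y : ℝ => (1 - lam * y) ^ (1 / lam) * y ^ ((n : ℝ) + α)) x =
        (Nat.factorial n : ℝ) * (1 - lam * x) ^ (1 / lam) * x ^ α *
          degLaguerre lam α n (x / (1 - lam * x)) := by
  intro x hx hlamx
  have hx' : 0 < 1 - lam * x := by linarith [(abs_lt.mp hlamx).2]
  have hf : ContDiffAt ℝ n (fun y : ℝ => (1 - lam * y) ^ (1 / lam)) x :=
    (contDiffAt_const.sub (contDiffAt_const.mul contDiffAt_id)).rpow_const_of_ne hx'.ne'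
  have hg : ContDiffAt ℝ n (fun y : ℝ => y ^ ((n : ℝ) + α)) x :=
    Real.contDiffAt_rpow_const (Or.inl hx.ne')
  rw [iteratedDeriv_fun_mul hf hg, degLaguerre, mul_sum]
  refine sum_congr rfl fun m hm => ?_
  rw [iteratedDeriv_one_sub_mul_rpow lam _ m (show x ∈ {y | 0 < 1 - lam * y} from hx'),
    iteratedDeriv_eq_iterate, Real.iter_deriv_rpow_const, ← mul_assoc]
  exact leibniz_term_eq_degLaguerre_term hlam α (Nat.lt_succ_iff.mp (mem_range.mp hm)) hx hx'
end

section
/- For every λ ∈ ℝ, every n ∈ ℕ with n ≥ 1, and every x ∈ ℝ: Σ_{m=0}^{n} C(n−1, n−m)·(−1)^m·(1)_{m,λ}·x^m/m! = (1/n!)·Σ_{k=0}^{n} (−x)^k·(1)_{k,λ}·L(n,k) = Σ_{k=1}^{n} (1)_{k,λ}·(−x)^k·(1/k!)·C(n−1, k−1). In other words, the degenerate generalized Laguerre polynomial with α = −1 satisfies L^{(−1)}_{n,λ}(x) = (1/n!)·Σ_{k=0}^{n} (−x)^k·(1)_{k,λ}·L(n,k). -/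
/-- The Lah numbers: `L(n,k) = C(n−1,k−1)·n!/k!` for `1 ≤ k ≤ n`, with
`L(0,0) = 1` and `L(n,0) = 0` for `n ≥ 1`. -/
noncomputable def lah (n k : ℕ) : ℝ :=
  if k = 0 then (if n = 0 then 1 else 0)
  else (Nat.choose (n - 1) (k - 1) : ℝ) * (Nat.factorial n : ℝ) / (Nat.factorial k : ℝ)

open Finset

theorem Finset.sum_range_succ_eq_sum_Icc_of_eq_zero {M : Type*} [AddCommMonoid M]
    {f : ℕ → M} (h0 : f 0 = 0) (n : ℕ) :
    ∑ k ∈ range (n + 1), f k = ∑ k ∈ Icc 1 n, f k := by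
  rw [range_eq_Ico, sum_eq_sum_Ico_succ_bot (by omega), h0, zero_add, Ico_add_one_right_eq_Icc]

theorem lah_zero_right {n : ℕ} (hn : n ≠ 0) : lah n 0 = 0 := by
  simp [lah, hn]

theorem one_div_factorial_mul_lah (n : ℕ) {k : ℕ} (hk : k ≠ 0) :
    1 / (n.factorial : ℝ) * lah n k = (n - 1).choose (k - 1) / k.factorial := by
  have hn : (n.factorial : ℝ) ≠ 0 := mod_cast n.factorial_ne_zero
  rw [lah, if_neg hk]
  field_simp

theorem Nat.choose_sub_eq_choose_pred {n m : ℕ} (h1 : 1 ≤ m) (hm : m ≤ n) :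
    (n - 1).choose (n - m) = (n - 1).choose (m - 1) :=
  Nat.choose_symm_of_eq_add (by omega)

/-- Theorem 4: for `n ≥ 1`,
`L^{(−1)}_{n,λ}(x) = (1/n!) ∑_{k=0}^n (−x)^k (1)_{k,λ} L(n,k)
 = ∑_{k=1}^n (1)_{k,λ} (−x)^k (1/k!) C(n−1,k−1)`. -/
theorem degLaguerre_neg_one_eq_lah (lam : ℝ) (n : ℕ) (hn : 1 ≤ n) (x : ℝ) :
    (∑ m ∈ Finset.range (n + 1),
        (Nat.choose (n - 1) (n - m) : ℝ) * (-1 : ℝ) ^ m * degFall lam m * x ^ m /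
          (Nat.factorial m : ℝ)) =
      (1 / (Nat.factorial n : ℝ)) *
        ∑ k ∈ Finset.range (n + 1), (-x) ^ k * degFall lam k * lah n k ∧
    (1 / (Nat.factorial n : ℝ)) *
        (∑ k ∈ Finset.range (n + 1), (-x) ^ k * degFall lam k * lah n k) =
      ∑ k ∈ Finset.Icc 1 n,
        degFall lam k * (-x) ^ k * (1 / (Nat.factorial k : ℝ)) *
          (Nat.choose (n - 1) (k - 1) : ℝ) := by
  have lah_side_eq : (1 / (Nat.factorial n : ℝ)) *
        (∑ k ∈ range (n + 1), (-x) ^ k * degFall lam k * lah n k) =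
      ∑ k ∈ Icc 1 n,
        degFall lam k * (-x) ^ k * (1 / (Nat.factorial k : ℝ)) *
          (Nat.choose (n - 1) (k - 1) : ℝ) := by
    have lah_n_zero : lah n 0 = 0 := lah_zero_right (by omega)
    rw [mul_sum, sum_range_succ_eq_sum_Icc_of_eq_zero (by simp [lah_n_zero])]
    refine sum_congr rfl fun k hk => ?_
    rw [mul_left_comm, one_div_factorial_mul_lah n (by grind)]
    ring
  refine ⟨?_, lah_side_eq⟩
  have choose_n : (n - 1).choose n = 0 := Nat.choose_eq_zero_of_lt (by omega)
  rw [lah_side_eq, sum_range_succ_eq_sum_Icc_of_eq_zero (by simp [choose_n])]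
  refine sum_congr rfl fun m hm => ?_
  rw [mem_Icc] at hm
  rw [Nat.choose_sub_eq_choose_pred hm.1 hm.2, neg_pow]
  ring
end

section
/- Let λ ∈ ℝ with λ ≠ 0, let α > 0 satisfy |λ|·α < 1, and let n ∈ ℕ. Then the series Σ_{k=0}^∞ (k)_n·(1)_{k,λ}·α^k/k! converges with sum α^n·(1)_{n,λ}·(1+λα)^{(1/λ) − n}, where (k)_n := k·(k−1)⋯(k−n+1) is the ordinary falling factorial. Equivalently, the degenerate Poisson random variable X_λ with parameter α, having probability mass function p(i) = e_λ(α)^{−1}·α^i·(1)_{i,λ}/i!, has falling factorial moment E[(X_λ)_n] = α^n·(1)_{n,λ}·(1/(1+αλ))^n. -/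
open Finset

theorem Ring.choose_eq_prod_range_sub_div {K : Type*} [Field K] [CharZero K] (r : K) (m : ℕ) :
    Ring.choose r m = (∏ j ∈ range m, (r - j)) / m.factorial := by
  rw [Ring.choose_eq_smul, ← descPochhammer_eval_eq_prod_range,
    ← Polynomial.eval₂_smulOneHom_eq_smeval, RingHom.ext_int RingHom.smulOneHom (algebraMap ℤ K),
    ← Polynomial.eval_map, descPochhammer_map, smul_eq_mul, inv_mul_eq_div]

theorem Real.hasSum_choose_mul_pow_s12 {r x : ℝ} (hx : |x| < 1) :
    HasSum (fun m ↦ Ring.choose r m * x ^ m) ((1 + x) ^ r) := by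
  have hx' : x ∈ Metric.eball (0 : ℝ) 1 := by
    simpa [enorm_eq_nnnorm, ← NNReal.coe_lt_coe] using hx
  simpa [binomialSeries, mul_comm] using
    Real.one_add_rpow_hasFPowerSeriesOnBall_zero (a := r) |>.hasSum hx'

theorem degFall_add {lam : ℝ} (hlam : lam ≠ 0) (n m : ℕ) :
    degFall lam (n + m) =
      degFall lam n * (lam ^ m * m.factorial * Ring.choose (1 / lam - n) m) := by
  have hfactor : ∀ j ∈ range m, 1 - ((n + j : ℕ) : ℝ) * lam = lam * (1 / lam - n - j) := by
    intro j _
    push_cast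
    field_simp
    ring
  have hfact : (m.factorial : ℝ) ≠ 0 := by positivity
  rw [degFall, prod_range_add, ← degFall, prod_congr rfl hfactor, prod_mul_distrib, prod_const,
    card_range, Ring.choose_eq_prod_range_sub_div]
  field_simp

theorem descFactorial_mul_degFall_mul_pow_div_factorial_add {lam : ℝ} (hlam : lam ≠ 0)
    (α : ℝ) (n m : ℕ) :
    ((m + n).descFactorial n : ℝ) * degFall lam (m + n) * α ^ (m + n) / (m + n).factorial =
      α ^ n * degFall lam n * (Ring.choose (1 / lam - n) m * (lam * α) ^ m) := by
  have hfactorial : (m.factorial * (m + n).descFactorial n : ℝ) = (m + n).factorial := by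
    exact_mod_cast Nat.add_sub_cancel m n ▸ Nat.factorial_mul_descFactorial (Nat.le_add_left n m)
  have hfact : (m.factorial : ℝ) ≠ 0 := by positivity
  rw [← hfactorial, add_comm m n, degFall_add hlam]
  field_simp
  ring

/-- Falling factorial moment of the degenerate Poisson random variable with parameter `α`:
`∑_{k=0}^∞ (k)ₙ (1)_{k,λ} α^k / k! = αⁿ (1)_{n,λ} (1+λα)^{1/λ − n}`,
i.e. `E[(X_λ)ₙ] = αⁿ (1)_{n,λ} (1/(1+αλ))ⁿ` after dividing by `e_λ(α) = (1+λα)^{1/λ}`. -/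
theorem degPoisson_falling_factorial_moment (lam α : ℝ) (hlam : lam ≠ 0)
    (hα : 0 < α) (hineq : |lam| * α < 1) (n : ℕ) :
    HasSum
      (fun k : ℕ =>
        (∏ j ∈ Finset.range n, ((k : ℝ) - (j : ℝ))) * degFall lam k * α ^ k /
          (Nat.factorial k : ℝ))
      (α ^ n * degFall lam n * (1 + lam * α) ^ (1 / lam - (n : ℝ))) := by
  have hx : |lam * α| < 1 := by rwa [abs_mul, abs_of_pos hα]
  have hfalling : ∀ k : ℕ, ∏ j ∈ range n, ((k : ℝ) - j) = k.descFactorial n := fun k ↦ by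
    rw [prod_range_natCast_sub, Nat.descFactorial_eq_prod_range]
  have hinitial : ∑ k ∈ range n,
      (∏ j ∈ range n, ((k : ℝ) - j)) * degFall lam k * α ^ k / k.factorial = 0 := by
    refine sum_eq_zero fun k hk ↦ ?_
    rw [hfalling, Nat.descFactorial_eq_zero_iff_lt.mpr (mem_range.mp hk)]
    simp
  rw [← hasSum_nat_add_iff' n, hinitial, sub_zero]
  simpa only [hfalling, descFactorial_mul_degFall_mul_pow_div_factorial_add hlam]
    using (Real.hasSum_choose_mul_pow_s12 (r := 1 / lam - n) hx).mul_left (α ^ n * degFall lam n)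
end
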